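/- Let F be a forest (forestially ordered set). If f̲ ≤ e̲ = e_1⋯e_k is a broad relation between tuples with the e_i pairwise ≤_d-incomparable, then the decomposition f̲ = f̲_1⋯f̲_k with f̲_i ≤ e_i is unique; in fact, for any letter s of f̲, one has s ∈ f̲_i if and only if s ≤_d e_i. -/

import Mathlib

universe u

namespace BroadPaper

/-- A broad relation on `X`: a relation between finite unordered tuples
(multisets) over `X` and elements of `X`. -/
abbrev Rel (X : Type u) : Type u := Multiset X → X → Prop

variable {X : Type u} {Y : Type u} {A : Type u} {B : Type u} {Z : Type u}

/-- Broad transitivity: if `f₁ ⋯ fₙ ≤ e` and `g̲ᵢ ≤ fᵢ` then `g̲₁ ⋯ g̲ₙ ≤ e`,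
encoded via a multiset of pairs `(g̲ᵢ, fᵢ)`. -/
def BTrans (r : Rel X) : Prop :=
  ∀ (p : Multiset (Multiset X × X)) (e : X),
    r (p.map Prod.snd) e → (∀ q ∈ p, r q.1 q.2) → r ((p.map Prod.fst).sum) e

/-- A pre-broad poset: reflexivity plus broad transitivity. -/
def IsPreBroad (r : Rel X) : Prop := (∀ e : X, r {e} e) ∧ BTrans r

/-- A (commutative) broad poset: a pre-broad poset satisfying antisymmetry. -/
def IsBroad (r : Rel X) : Prop :=
  IsPreBroad r ∧ ∀ e f : X, r {e} f → r {f} e → e = f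

/-- Simplicity: letters in any broad relation are pairwise distinct. -/
def Simple (r : Rel X) : Prop := ∀ fs e, r fs e → fs.Nodup

/-- The descendant relation `f ≤_d e`. -/
def descends (r : Rel X) (f e : X) : Prop := ∃ fs, r fs e ∧ f ∈ fs

def Comparable (r : Rel X) (f g : X) : Prop := descends r f g ∨ descends r g f

def Incomp (r : Rel X) (f g : X) : Prop := ¬ descends r f g ∧ ¬ descends r g f

/-- Blockwise extension of a broad relation to a relation between tuples:
`fs ≤ es` iff `fs = f̲₁ ⋯ f̲ₖ`, `es = e₁ ⋯ eₖ` with `f̲ᵢ ≤ eᵢ`. -/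
def tupleLE (r : Rel X) (fs es : Multiset X) : Prop :=
  ∃ p : Multiset (Multiset X × X),
    p.map Prod.snd = es ∧ (p.map Prod.fst).sum = fs ∧ ∀ q ∈ p, r q.1 q.2

/-- A leaf: no tuple strictly below `e`. -/
def IsLeaf (r : Rel X) (e : X) : Prop := ¬ ∃ fs, r fs e ∧ fs ≠ ({e} : Multiset X)

/-- `fs` is the maximum tuple strictly below `e` (written `e^↑`).
If `fs ≠ 0`, `e` is a node; if `fs = 0`, `e` is a stump. -/
def upTuple (r : Rel X) (e : X) (fs : Multiset X) : Prop :=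
  (r fs e ∧ fs ≠ ({e} : Multiset X)) ∧
    ∀ gs, r gs e → gs ≠ ({e} : Multiset X) → tupleLE r gs fs

def IsStump (r : Rel X) (e : X) : Prop := upTuple r e 0

/-- A dendroidally ordered set (tree): a finite simple broad poset in which
every element is a leaf, node or stump, with a `≤_d`-maximum (root). -/
def IsTree (r : Rel X) : Prop :=
  IsBroad r ∧ Finite X ∧ Simple r ∧
    (∀ e : X, IsLeaf r e ∨ ∃ fs, upTuple r e fs) ∧
    ∃ rt : X, ∀ e, descends r e rt

def IsMaxEl (r : Rel X) (e : X) : Prop := ∀ s, descends r e s → s = e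

/-- A forestially ordered set (forest): each element has a unique
`≤_d`-maximal element above it. -/
def IsForest (r : Rel X) : Prop :=
  IsBroad r ∧ Finite X ∧ Simple r ∧
    (∀ e : X, IsLeaf r e ∨ ∃ fs, upTuple r e fs) ∧
    ∀ e : X, ∃! rt : X, IsMaxEl r rt ∧ descends r e rt

/-- A map of broad posets: preserves broad relations (letterwise on tuples). -/
def BroadHom (r : Rel X) (r' : Rel Y) (φ : X → Y) : Prop :=
  ∀ fs e, r fs e → r' (fs.map φ) (φ e)

/-- `rs` is the root tuple: the tuple of `≤_d`-maximal elements (no repeats). -/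
def IsRootTuple (r : Rel X) (rs : Multiset X) : Prop :=
  rs.Nodup ∧ ∀ x, x ∈ rs ↔ IsMaxEl r x

/-- Independent map of forests: `φ(r̲_F)·e̲ ≤ r̲_{F'}` for some tuple `e̲`. -/
def Independent (r : Rel X) (r' : Rel Y) (φ : X → Y) : Prop :=
  ∃ (rs : Multiset X) (rs' : Multiset Y) (es : Multiset Y),
    IsRootTuple r rs ∧ IsRootTuple r' rs' ∧ tupleLE r' (rs.map φ + es) rs'

/-- The (pre-)broad relation generated by a set of generating relations:
closure under reflexivity and broad transitivity. -/
inductive GenRel (gen : Rel X) : Rel X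
  | of : ∀ fs e, gen fs e → GenRel gen fs e
  | refl : ∀ e, GenRel gen {e} e
  | btrans : ∀ (p : Multiset (Multiset X × X)) (e : X),
      GenRel gen (p.map Prod.snd) e → (∀ q ∈ p, GenRel gen q.1 q.2) →
      GenRel gen ((p.map Prod.fst).sum) e

/-- Generators of the tensor product `S ⊗ T`: relations `s̲ × t ≤ (s,t)` and
`s × t̲ ≤ (s,t)`. -/
def tensorGen (rS : Rel A) (rT : Rel B) : Rel (A × B) := fun xs x =>
  (∃ as, rS as x.1 ∧ xs = as.map fun a => (a, x.2)) ∨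
  (∃ bs, rT bs x.2 ∧ xs = bs.map fun b => (x.1, b))

/-- The tensor product broad relation on `A × B`. -/
def tensorRel (rS : Rel A) (rT : Rel B) : Rel (A × B) := GenRel (tensorGen rS rT)

/-- Product of tuples: all pairs from `as` and `bs`. -/
def mprod (as : Multiset A) (bs : Multiset B) : Multiset (A × B) :=
  as.bind fun a => bs.map fun b => (a, b)

end BroadPaper

/-!
In a forest the `≤_d`-upper set of any element is a chain: two elements above `s` lie below a
common root, and descending from that root through the maximal tuples `t^↑` both paths must keep
choosing the same child, since by simplicity no letter descends from two distinct letters of one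
relation. Hence a letter `s` of `f̲` lies below exactly one of the pairwise incomparable `eᵢ`,
which forces it into the block `f̲ᵢ`, and the blocks are determined by their letters because the
relation is simple.
-/

theorem Multiset.eq_of_map_snd_eq {α β : Type*} {p p' : Multiset (α × β)}
    (hnd : (p.map Prod.snd).Nodup) (h : p.map Prod.snd = p'.map Prod.snd)
    (hfst : ∀ q ∈ p, ∀ q' ∈ p', q.2 = q'.2 → q.1 = q'.1) : p = p' := by
  have hnd' : (p'.map Prod.snd).Nodup := h ▸ hnd
  refine (Multiset.Nodup.ext (hnd.of_map _) (hnd'.of_map _)).2 fun q =>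
    ⟨fun hq => ?_, fun hq' => ?_⟩
  · obtain ⟨q', hq', hsnd⟩ := Multiset.mem_map.1 (h ▸ Multiset.mem_map_of_mem Prod.snd hq)
    rwa [Prod.ext (hfst q hq q' hq' hsnd.symm) hsnd.symm]
  · obtain ⟨q₀, hq₀, hsnd⟩ := Multiset.mem_map.1 (h.symm ▸ Multiset.mem_map_of_mem Prod.snd hq')
    rwa [← Prod.ext (hfst q₀ hq₀ q hq' hsnd) hsnd]

namespace BroadPaper

variable {X : Type u} {r : Rel X}

/-- The relation `f̲ ≤ e̲` witnessed by the blocks `p = {(f̲ᵢ, eᵢ)}`. -/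
def IsBlockDecomposition (r : Rel X) (fs es : Multiset X) (p : Multiset (Multiset X × X)) :
    Prop :=
  p.map Prod.snd = es ∧ (p.map Prod.fst).sum = fs ∧ ∀ q ∈ p, r q.1 q.2

theorem mem_sum_map_fst {p : Multiset (Multiset X × X)} {s : X} :
    s ∈ (p.map Prod.fst).sum ↔ ∃ q ∈ p, s ∈ q.1 := by
  change s ∈ (p.map Prod.fst).join ↔ _
  simp only [Multiset.mem_join, Multiset.mem_map]
  exact ⟨fun ⟨_, ⟨q, hq, rfl⟩, hs⟩ => ⟨q, hq, hs⟩, fun ⟨q, hq, hs⟩ => ⟨q.1, ⟨q, hq, rfl⟩, hs⟩⟩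

instance : Std.Symm (Incomp r) := ⟨fun _ _ h => ⟨h.2, h.1⟩⟩

section Broad

variable (hb : IsBroad r)
include hb

theorem descends_refl (e : X) : descends r e e :=
  ⟨{e}, hb.1.1 e, Multiset.mem_singleton_self e⟩

theorem rel_add_erase [DecidableEq X] {fs gs : Multiset X} {e a : X}
    (hfs : r fs e) (ha : a ∈ fs) (hgs : r gs a) : r (gs + fs.erase a) e := by
  have h := hb.1.2 ((gs, a) ::ₘ (fs.erase a).map fun x => ({x}, x)) e
  simp only [Multiset.map_cons, Multiset.map_map, Function.comp_def, Multiset.map_id',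
    Multiset.cons_erase ha, Multiset.sum_cons, Multiset.sum_map_singleton] at h
  refine h hfs fun q hq => ?_
  obtain rfl | ⟨x, -, rfl⟩ := Multiset.mem_cons.1 hq |>.imp_right Multiset.mem_map.1
  · exact hgs
  · exact hb.1.1 x

theorem descends_trans {s f e : X} (h₁ : descends r s f) (h₂ : descends r f e) :
    descends r s e := by
  classical
  obtain ⟨fs, hfs, hsf⟩ := h₁
  obtain ⟨gs, hgs, hfg⟩ := h₂
  exact ⟨fs + gs.erase f, rel_add_erase hb hgs hfg hfs, Multiset.mem_add.2 (Or.inl hsf)⟩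

variable (hsi : Simple r)
include hsi

theorem eq_singleton_of_rel_of_mem {fs : Multiset X} {e : X} (hfs : r fs e) (he : e ∈ fs) :
    fs = {e} := by
  classical
  have hdisj := (Multiset.nodup_add.1 (hsi _ _ (rel_add_erase hb hfs he hfs))).2.2
  have h0 : fs.erase e = 0 := Multiset.eq_zero_of_forall_notMem fun x hx =>
    Multiset.disjoint_left.1 hdisj (Multiset.mem_of_mem_erase hx) hx
  rw [← Multiset.cons_erase he, h0]
  rfl

theorem eq_singleton_of_rel_of_descends {fs : Multiset X} {e f : X} (hfs : r fs f)
    (he : e ∈ fs) (hfe : descends r f e) : fs = {e} := by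
  classical
  obtain ⟨gs, hgs, hfg⟩ := hfe
  have hsing := eq_singleton_of_rel_of_mem hb hsi (rel_add_erase hb hfs he hgs)
    (Multiset.mem_add.2 (Or.inl hfg))
  have hcard := congrArg Multiset.card hsing
  have hgs_pos : 0 < Multiset.card gs := Multiset.card_pos_iff_exists_mem.2 ⟨f, hfg⟩
  simp only [Multiset.card_add, Multiset.card_singleton] at hcard
  rw [← Multiset.cons_erase he, Multiset.card_eq_zero.1 (by omega : Multiset.card (fs.erase e) = 0)]
  rfl

theorem descends_antisymm {e f : X} (h₁ : descends r e f) (h₂ : descends r f e) : e = f := by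
  obtain ⟨fs, hfs, hef⟩ := h₁
  obtain ⟨gs, hgs, hfg⟩ := h₂
  rw [eq_singleton_of_rel_of_descends hb hsi hfs hef ⟨gs, hgs, hfg⟩] at hfs
  rw [eq_singleton_of_rel_of_descends hb hsi hgs hfg ⟨_, hfs, Multiset.mem_singleton_self e⟩]
    at hgs
  exact hb.2 e f hfs hgs

abbrev descendsPartialOrder : PartialOrder X where
  le := descends r
  le_refl := descends_refl hb
  le_trans _ _ _ := descends_trans hb
  le_antisymm _ _ := descends_antisymm hb hsi

/-- Were `c ≠ c'`, substituting the relations below `c` and `c'` into `fs` would repeat `s`. -/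
theorem eq_of_descends_of_mem {fs : Multiset X} {e c c' s : X} (hfs : r fs e) (hc : c ∈ fs)
    (hc' : c' ∈ fs) (hsc : descends r s c) (hsc' : descends r s c') : c = c' := by
  classical
  by_contra hne
  obtain ⟨gs, hgs, hsg⟩ := hsc
  obtain ⟨gs', hgs', hsg'⟩ := hsc'
  have hc'e : c' ∈ fs.erase c := (Multiset.mem_erase_of_ne (Ne.symm hne)).2 hc'
  have hA := rel_add_erase hb hfs hc hgs
  by_cases hsc' : s = c'
  · subst hsc'
    exact Multiset.disjoint_left.1 (Multiset.nodup_add.1 (hsi _ _ hA)).2.2 hsg hc'e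
  · have hB := rel_add_erase hb hA (Multiset.mem_add.2 (Or.inr hc'e)) hgs'
    exact Multiset.disjoint_left.1 (Multiset.nodup_add.1 (hsi _ _ hB)).2.2 hsg'
      ((Multiset.mem_erase_of_ne hsc').2 (Multiset.mem_add.2 (Or.inl hsg)))

end Broad

theorem eq_of_descends_of_isLeaf {e t : X} (ht : IsLeaf r t) (het : descends r e t) : e = t := by
  obtain ⟨gs, hgs, hegs⟩ := het
  by_contra hne
  exact ht ⟨gs, hgs, by rintro rfl; exact hne (Multiset.mem_singleton.1 hegs)⟩

theorem exists_mem_upTuple_descends {s e : X} {ts : Multiset X} (hup : upTuple r e ts)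
    (hse : descends r s e) (hne : s ≠ e) : ∃ c ∈ ts, descends r s c := by
  obtain ⟨gs, hgs, hsg⟩ := hse
  obtain ⟨P, hP, rfl, hPr⟩ := hup.2 gs hgs (by rintro rfl; exact hne (Multiset.mem_singleton.1 hsg))
  obtain ⟨q, hq, hsq⟩ := mem_sum_map_fst.1 hsg
  exact ⟨q.2, hP ▸ Multiset.mem_map_of_mem _ hq, q.1, hPr q hq, hsq⟩

theorem ne_of_mem_upTuple (hb : IsBroad r) (hsi : Simple r) {e c : X} {ts : Multiset X}
    (hup : upTuple r e ts) (hc : c ∈ ts) : c ≠ e := by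
  rintro rfl
  exact hup.1.2 (eq_singleton_of_rel_of_mem hb hsi hup.1.1 hc)

/-- Induction on `t`: unless `e` or `e'` is `t`, both lie below the same child of `t`. -/
theorem comparable_of_descends_of_le_common (hb : IsBroad r) (hfin : Finite X)
    (hsi : Simple r) (hnode : ∀ e : X, IsLeaf r e ∨ ∃ fs, upTuple r e fs) {s : X} (t : X) :
    ∀ e e', descends r s e → descends r s e' → descends r e t → descends r e' t →
      Comparable r e e' := by
  let := descendsPartialOrder hb hsi
  induction t using WellFoundedLT.induction with
  | ind t ih =>
    intro e e' hse hse' het he't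
    by_cases het' : e = t
    · exact Or.inr (het' ▸ he't)
    by_cases he't' : e' = t
    · exact Or.inl (he't' ▸ het)
    obtain ⟨ts, hts⟩ := (hnode t).resolve_left fun hleaf =>
      het' (eq_of_descends_of_isLeaf hleaf het)
    obtain ⟨c, hc, hec⟩ := exists_mem_upTuple_descends hts het het'
    obtain ⟨c', hc', he'c'⟩ := exists_mem_upTuple_descends hts he't he't'
    obtain rfl : c = c' := eq_of_descends_of_mem hb hsi hts.1.1 hc hc'
      (descends_trans hb hse hec) (descends_trans hb hse' he'c')
    have hct : c < t := lt_of_le_of_ne ⟨ts, hts.1.1, hc⟩ (ne_of_mem_upTuple hb hsi hts hc)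
    exact ih c hct e e' hse hse' hec he'c'

theorem IsForest.comparable_of_descends (hf : IsForest r) {s e e' : X}
    (hse : descends r s e) (hse' : descends r s e') : Comparable r e e' := by
  obtain ⟨hb, hfin, hsi, hnode, hroot⟩ := hf
  obtain ⟨m, ⟨hm, hem⟩, -⟩ := hroot e
  obtain ⟨m', ⟨hm', he'm'⟩, -⟩ := hroot e'
  obtain ⟨_, -, huniq⟩ := hroot s
  have hmm' : m' = m := (huniq m' ⟨hm', descends_trans hb hse' he'm'⟩).trans
    (huniq m ⟨hm, descends_trans hb hse hem⟩).symm
  exact comparable_of_descends_of_le_common hb hfin hsi hnode m e e' hse hse' hem (hmm' ▸ he'm')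

theorem IsForest.eq_of_descends_of_pairwise_incomp (hf : IsForest r) {es : Multiset X}
    (hinc : es.Pairwise (Incomp r)) {a b s : X} (ha : a ∈ es) (hb' : b ∈ es)
    (hsa : descends r s a) (hsb : descends r s b) : a = b := by
  by_contra hne
  have hab := hinc.forall ha hb' hne
  exact (hf.comparable_of_descends hsa hsb).elim hab.1 hab.2

theorem nodup_of_pairwise_incomp (hb : IsBroad r) {es : Multiset X}
    (hinc : es.Pairwise (Incomp r)) : es.Nodup := by
  obtain ⟨l, rfl, hl⟩ := hinc
  have : Std.Irrefl (Incomp r) := ⟨fun a h => h.1 (descends_refl hb a)⟩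
  exact Multiset.coe_nodup.2 hl.nodup

theorem IsForest.mem_fst_iff_descends (hf : IsForest r) {fs es : Multiset X}
    (hinc : es.Pairwise (Incomp r)) {p : Multiset (Multiset X × X)}
    (hp : IsBlockDecomposition r fs es p) {q : Multiset X × X} (hq : q ∈ p) {s : X}
    (hs : s ∈ fs) : s ∈ q.1 ↔ descends r s q.2 := by
  obtain ⟨hsnd, hsum, hrel⟩ := hp
  refine ⟨fun hsq => ⟨q.1, hrel q hq, hsq⟩, fun hsd => ?_⟩
  obtain ⟨q', hq', hsq'⟩ := mem_sum_map_fst.1 (hsum ▸ hs)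
  have hmem : ∀ {q}, q ∈ p → q.2 ∈ es := fun hq => hsnd ▸ Multiset.mem_map_of_mem _ hq
  have hsnd_eq := hf.eq_of_descends_of_pairwise_incomp hinc (hmem hq') (hmem hq)
    ⟨q'.1, hrel q' hq', hsq'⟩ hsd
  have hnd : (p.map Prod.snd).Nodup := hsnd ▸ nodup_of_pairwise_incomp hf.1 hinc
  rwa [← Multiset.inj_on_of_nodup_map hnd q' hq' q hq hsnd_eq]

theorem IsForest.mem_fst_iff (hf : IsForest r) {fs es : Multiset X}
    (hinc : es.Pairwise (Incomp r)) {p : Multiset (Multiset X × X)}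
    (hp : IsBlockDecomposition r fs es p) {q : Multiset X × X} (hq : q ∈ p) (s : X) :
    s ∈ q.1 ↔ s ∈ fs ∧ descends r s q.2 :=
  ⟨fun hs => ⟨hp.2.1 ▸ mem_sum_map_fst.2 ⟨q, hq, hs⟩, ⟨q.1, hp.2.2 q hq, hs⟩⟩,
    fun ⟨hs, hsd⟩ => (hf.mem_fst_iff_descends hinc hp hq hs).2 hsd⟩

theorem IsForest.blockDecomposition_unique (hf : IsForest r) {fs es : Multiset X}
    (hinc : es.Pairwise (Incomp r)) {p p' : Multiset (Multiset X × X)}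
    (hp : IsBlockDecomposition r fs es p) (hp' : IsBlockDecomposition r fs es p') : p = p' := by
  refine Multiset.eq_of_map_snd_eq (hp.1 ▸ nodup_of_pairwise_incomp hf.1 hinc)
    (hp.1.trans hp'.1.symm) fun q hq q' hq' hsnd => ?_
  refine (Multiset.Nodup.ext (hf.2.2.1 _ _ (hp.2.2 q hq)) (hf.2.2.1 _ _ (hp'.2.2 q' hq'))).2
    fun s => ?_
  rw [hf.mem_fst_iff hinc hp hq, hf.mem_fst_iff hinc hp' hq', hsnd]

/-- In a forest, if `f̲ ≤ e̲` with the letters of `e̲`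
pairwise `≤_d`-incomparable, the block decomposition `f̲ = f̲₁ ⋯ f̲ₖ` with
`f̲ᵢ ≤ eᵢ` is unique, and a letter `s` of `f̲` lies in the block `f̲ᵢ` iff
`s ≤_d eᵢ`. -/
theorem stmt8 {X : Type u} (r : Rel X) (hf : IsForest r)
    (fs es : Multiset X) (hinc : es.Pairwise (Incomp r))
    (p p' : Multiset (Multiset X × X))
    (hp : p.map Prod.snd = es ∧ (p.map Prod.fst).sum = fs ∧ ∀ q ∈ p, r q.1 q.2)
    (hp' : p'.map Prod.snd = es ∧ (p'.map Prod.fst).sum = fs ∧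
      ∀ q ∈ p', r q.1 q.2) :
    p = p' ∧ ∀ q ∈ p, ∀ s ∈ fs, (s ∈ q.1 ↔ descends r s q.2) :=
  ⟨hf.blockDecomposition_unique hinc hp hp', fun _ hq _ hs => hf.mem_fst_iff_descends hinc hp hq hs⟩

end BroadPaper
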